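/- arXiv:2012.10315 — 2 statements merged into one kernel-verified Lean document; each statement's English description precedes it below -/
import Mathlib

section
/- Let T be a compact positive self-adjoint operator on a separable Hilbert space H with eigenvalues {η_k} and orthonormal eigenfunctions {e_k}. Suppose h₀ ∈ H satisfies h₀ = T^((c-1)/2) g for some g ∈ H with ‖g‖² ≤ ζ, where c ∈ (1,2]. Define the regularized element h_ξ = (T + ξI)^{-1} T h₀ for ξ > 0. Then ‖h_ξ - h₀‖ ≤ ξ^((c-1)/2) √ζ. -/
open scoped RealInnerProductSpace

/-!
In the eigenbasis the bias `h_ξ - h₀` has coefficients `-(ξ / (η_k + ξ)) η_k ^ s ⟨g, e_k⟩` with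
`s = (c - 1) / 2 ∈ (0, 1/2]`. Weighted AM–GM gives `η ^ s ξ ^ (1 - s) ≤ η + ξ`, i.e.
`ξ / (η + ξ) · η ^ s ≤ ξ ^ s` (the Tikhonov filter has qualification one), so every coefficient
of the bias is at most `ξ ^ s` times the corresponding one of `g`, and Parseval finishes.
-/

theorem HilbertBasis.norm_le_mul_of_norm_repr_le {ι 𝕜 E : Type*} [RCLike 𝕜]
    [NormedAddCommGroup E] [InnerProductSpace 𝕜 E] (b : HilbertBasis ι 𝕜 E) {x y : E} {C : ℝ}
    (hC : 0 ≤ C) (h : ∀ i, ‖b.repr x i‖ ≤ C * ‖b.repr y i‖) : ‖x‖ ≤ C * ‖y‖ := by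
  have hnorm_C : ‖(C : 𝕜)‖ = C := by rw [RCLike.norm_ofReal, abs_of_nonneg hC]
  calc ‖x‖ = ‖b.repr x‖ := (b.repr.norm_map x).symm
    _ ≤ ‖(C : 𝕜) • b.repr y‖ :=
        lp.norm_mono two_ne_zero fun i ↦ by simpa [norm_smul, abs_of_nonneg hC] using h i
    _ = C * ‖y‖ := by rw [norm_smul, hnorm_C, b.repr.norm_map]

theorem div_add_mul_rpow_le_rpow {η ξ s : ℝ} (hη : 0 ≤ η) (hξ : 0 < ξ) (hs0 : 0 ≤ s)
    (hs1 : s ≤ 1) : ξ / (η + ξ) * η ^ s ≤ ξ ^ s := by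
  rw [div_mul_eq_mul_div, div_le_iff₀ (by positivity)]
  have amgm : η ^ s * ξ ^ (1 - s) ≤ s * η + (1 - s) * ξ :=
    Real.geom_mean_le_arith_mean2_weighted hs0 (by linarith) hη hξ.le (by ring)
  have hξ_split : ξ ^ s * ξ ^ (1 - s) = ξ := by
    rw [← Real.rpow_add hξ, add_sub_cancel, Real.rpow_one]
  have hξs : 0 ≤ ξ ^ s := Real.rpow_nonneg hξ.le s
  calc ξ * η ^ s = ξ ^ s * (η ^ s * ξ ^ (1 - s)) := by nth_rewrite 1 [← hξ_split]; ring
    _ ≤ ξ ^ s * (s * η + (1 - s) * ξ) := by gcongr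
    _ ≤ ξ ^ s * (η + ξ) := mul_le_mul_of_nonneg_left (by nlinarith) hξs

theorem stmt0_general {H : Type*} [NormedAddCommGroup H] [InnerProductSpace ℝ H]
    (e : HilbertBasis ℕ ℝ H) (η : ℕ → ℝ) (hη : ∀ k, 0 ≤ η k)
    (c ζ : ℝ) (hc1 : 1 < c) (hc2 : c ≤ 2)
    (g h₀ hreg : H) (hg : ‖g‖ ^ 2 ≤ ζ)
    (hh₀ : ∀ k, e.repr h₀ k = η k ^ ((c - 1) / 2) * e.repr g k)
    (ξ : ℝ) (hξ : 0 < ξ)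
    (hhreg : ∀ k, e.repr hreg k = (η k / (η k + ξ)) * e.repr h₀ k) :
    ‖hreg - h₀‖ ≤ ξ ^ ((c - 1) / 2) * Real.sqrt ζ := by
  set s := (c - 1) / 2
  have hs0 : 0 ≤ s := by simp only [s]; linarith
  have hs1 : s ≤ 1 := by simp only [s]; linarith
  have hcoef : ∀ k, ‖e.repr (hreg - h₀) k‖ ≤ ξ ^ s * ‖e.repr g k‖ := fun k ↦ by
    have hres : e.repr (hreg - h₀) k = -(ξ / (η k + ξ) * η k ^ s) * e.repr g k := by
      have : η k + ξ ≠ 0 := by linarith [hη k]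
      simp only [map_sub, lp.coeFn_sub, Pi.sub_apply, hhreg, hh₀]
      field_simp
      ring
    rw [hres, norm_mul, norm_neg, Real.norm_of_nonneg (by have := hη k; positivity)]
    gcongr
    exact div_add_mul_rpow_le_rpow (hη k) hξ hs0 hs1
  calc ‖hreg - h₀‖ ≤ ξ ^ s * ‖g‖ :=
        e.norm_le_mul_of_norm_repr_le (Real.rpow_nonneg hξ.le s) hcoef
    _ ≤ ξ ^ s * Real.sqrt ζ := by
        gcongr
        exact Real.le_sqrt_of_sq_le hg

/-- Regularization bias bound under a source condition, in spectral form. -/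
theorem stmt0 {H : Type*} [NormedAddCommGroup H] [InnerProductSpace ℝ H] [CompleteSpace H]
    (e : HilbertBasis ℕ ℝ H) (η : ℕ → ℝ) (hη : ∀ k, 0 ≤ η k)
    (c ζ : ℝ) (hc1 : 1 < c) (hc2 : c ≤ 2)
    (g h₀ hreg : H) (hg : ‖g‖ ^ 2 ≤ ζ)
    (hh₀ : ∀ k, e.repr h₀ k = η k ^ ((c - 1) / 2) * e.repr g k)
    (ξ : ℝ) (hξ : 0 < ξ)
    (hhreg : ∀ k, e.repr hreg k = (η k / (η k + ξ)) * e.repr h₀ k) :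
    ‖hreg - h₀‖ ≤ ξ ^ ((c - 1) / 2) * Real.sqrt ζ :=
  stmt0_general e η hη c ζ hc1 hc2 g h₀ hreg hg hh₀ ξ hξ hhreg
end

section
/- Let H be a Hilbert space and let (Ω, P) be a probability space with a random element φ : Ω → H satisfying ‖φ(ω)‖ ≤ κ almost surely, and a bounded random variable Y with |Y| ≤ C almost surely. Let T = E[φ ⊗ φ] and suppose h₀ ∈ H satisfies E[φ Y] = T h₀. Define h_ξ as the minimizer of E[(Y - ⟨h, φ⟩)²] + ξ‖h‖² over H for ξ > 0. Then ‖h_ξ‖ ≤ κ‖h₀‖/√ξ. -/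
/-!
Perturbing the minimiser `w` of the ridge risk `J` along its own ray, `c ↦ J (c • w)` is a
quadratic minimised at `c = 1`, which gives the stationarity identity
`E[⟪w, φ⟫ Y] = E[⟪w, φ⟫²] + ξ ‖w‖²`. The normal equation `E[φ Y] = T h₀` turns the left side
into `E[⟪h₀, φ⟫ ⟪w, φ⟫]`, so `ξ ‖w‖² = E[g f - f²] ≤ E[g²] / 4 ≤ κ² ‖h₀‖² / 4` with
`f = ⟪w, φ⟫`, `g = ⟪h₀, φ⟫`.
-/

open scoped RealInnerProductSpace
open MeasureTheory

lemma eq_of_forall_quadratic_ge_at_one {a b : ℝ}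
    (h : ∀ c : ℝ, a - 2 * b ≤ a * c ^ 2 - 2 * b * c) : a = b := by
  have hdisc := discrim_le_zero (a := a) (b := 2 * (a - b)) (c := 0) fun t => by
    nlinarith [h (1 + t)]
  rw [discrim] at hdisc
  nlinarith [sq_nonneg (a - b)]

lemma le_div_sqrt_of_mul_sq_le {ξ x y : ℝ} (hξ : 0 < ξ) (hy : 0 ≤ y) (h : ξ * x ^ 2 ≤ y ^ 2) :
    x ≤ y / Real.sqrt ξ := by
  rw [le_div_iff₀ (Real.sqrt_pos.2 hξ)]
  nlinarith [Real.sq_sqrt hξ.le, Real.sqrt_nonneg ξ]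

section Ridge

variable {H : Type*} [NormedAddCommGroup H] [InnerProductSpace ℝ H]
  {Ω : Type*} [MeasurableSpace Ω] {P : Measure Ω}

lemma integral_sub_mul_sq {Y f : Ω → ℝ} (hY : MemLp Y 2 P) (hf : MemLp f 2 P) (c : ℝ) :
    ∫ ω, (Y ω - c * f ω) ^ 2 ∂P
      = ∫ ω, Y ω ^ 2 ∂P - 2 * c * ∫ ω, f ω * Y ω ∂P + c ^ 2 * ∫ ω, f ω ^ 2 ∂P := by
  have hfY : Integrable (fun ω => 2 * c * (f ω * Y ω)) P := (hf.integrable_mul hY).const_mul _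
  have hff : Integrable (fun ω => c ^ 2 * f ω ^ 2) P := hf.integrable_sq.const_mul _
  have hYY : Integrable (fun ω => Y ω ^ 2 - 2 * c * (f ω * Y ω)) P := hY.integrable_sq.sub hfY
  calc ∫ ω, (Y ω - c * f ω) ^ 2 ∂P
      = ∫ ω, (Y ω ^ 2 - 2 * c * (f ω * Y ω) + c ^ 2 * f ω ^ 2) ∂P := by
        congr 1 with ω; ring
    _ = _ := by
        rw [integral_add hYY hff, integral_sub hY.integrable_sq hfY, integral_const_mul,
          integral_const_mul]

noncomputable def ridgeRisk (P : Measure Ω) (φ : Ω → H) (Y : Ω → ℝ) (ξ : ℝ) (h : H) : ℝ :=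
  (∫ ω, (Y ω - ⟪h, φ ω⟫) ^ 2 ∂P) + ξ * ‖h‖ ^ 2

variable {φ : Ω → H} {Y : Ω → ℝ} {ξ : ℝ}

lemma integral_inner_mul_eq_of_forall_ridgeRisk_le {w : H} (hY : MemLp Y 2 P) (hφ : MemLp φ 2 P)
    (hmin : ∀ h, ridgeRisk P φ Y ξ w ≤ ridgeRisk P φ Y ξ h) :
    ∫ ω, ⟪w, φ ω⟫ * Y ω ∂P = ∫ ω, ⟪w, φ ω⟫ ^ 2 ∂P + ξ * ‖w‖ ^ 2 := by
  have hf : MemLp (fun ω => ⟪w, φ ω⟫) 2 P := hφ.const_inner w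
  have risk_smul : ∀ c : ℝ, ridgeRisk P φ Y ξ (c • w) = ∫ ω, Y ω ^ 2 ∂P
      - 2 * c * ∫ ω, ⟪w, φ ω⟫ * Y ω ∂P + c ^ 2 * (∫ ω, ⟪w, φ ω⟫ ^ 2 ∂P + ξ * ‖w‖ ^ 2) := by
    intro c
    simp only [ridgeRisk, real_inner_smul_left, norm_smul, Real.norm_eq_abs, mul_pow, sq_abs]
    rw [integral_sub_mul_sq hY hf]
    ring
  refine (eq_of_forall_quadratic_ge_at_one fun c => ?_).symm
  have h := hmin (c • w)
  have h1 := risk_smul 1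
  rw [one_smul] at h1
  rw [h1, risk_smul] at h
  linarith

lemma inner_integral_smul [CompleteSpace H] {a : Ω → ℝ}
    (ha : Integrable (fun ω => a ω • φ ω) P) (w : H) :
    ⟪w, ∫ ω, a ω • φ ω ∂P⟫ = ∫ ω, ⟪w, φ ω⟫ * a ω ∂P := by
  rw [← integral_inner ha]
  congr 1 with ω
  rw [real_inner_smul_right, mul_comm]

lemma mul_sub_sq_le_sq_div_four (a b : ℝ) : a * b - b ^ 2 ≤ a ^ 2 / 4 := by
  nlinarith [sq_nonneg (a - 2 * b)]

lemma mul_norm_sq_le_of_forall_ridgeRisk_le [CompleteSpace H] {T : H →L[ℝ] H} {h₀ w : H}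
    (hY : MemLp Y 2 P) (hφ : MemLp φ 2 P) (hT : T h₀ = ∫ ω, ⟪φ ω, h₀⟫ • φ ω ∂P)
    (hh₀ : ∫ ω, Y ω • φ ω ∂P = T h₀)
    (hmin : ∀ h, ridgeRisk P φ Y ξ w ≤ ridgeRisk P φ Y ξ h) :
    ξ * ‖w‖ ^ 2 ≤ (∫ ω, ⟪h₀, φ ω⟫ ^ 2 ∂P) / 4 := by
  have hf : MemLp (fun ω => ⟪w, φ ω⟫) 2 P := hφ.const_inner w
  have hg : MemLp (fun ω => ⟪h₀, φ ω⟫) 2 P := hφ.const_inner h₀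
  have hgφ : MemLp (fun ω => ⟪φ ω, h₀⟫ • φ ω) 1 P := by
    simp only [real_inner_comm h₀]
    exact hφ.smul hg
  have normal_eq : ∫ ω, ⟪w, φ ω⟫ * Y ω ∂P = ∫ ω, ⟪h₀, φ ω⟫ * ⟪w, φ ω⟫ ∂P := by
    rw [← inner_integral_smul (memLp_one_iff_integrable.1 (hφ.smul hY)), hh₀, hT,
      inner_integral_smul (memLp_one_iff_integrable.1 hgφ)]
    simp only [real_inner_comm h₀, mul_comm]
  have stationary := integral_inner_mul_eq_of_forall_ridgeRisk_le hY hφ hmin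
  have hgf : Integrable (fun ω => ⟪h₀, φ ω⟫ * ⟪w, φ ω⟫) P := hg.integrable_mul hf
  calc ξ * ‖w‖ ^ 2 = ∫ ω, (⟪h₀, φ ω⟫ * ⟪w, φ ω⟫ - ⟪w, φ ω⟫ ^ 2) ∂P := by
        rw [integral_sub hgf hf.integrable_sq]
        linarith
    _ ≤ ∫ ω, ⟪h₀, φ ω⟫ ^ 2 / 4 ∂P :=
        integral_mono (hgf.sub hf.integrable_sq)
          (hg.integrable_sq.div_const 4) fun ω => mul_sub_sq_le_sq_div_four _ _
    _ = (∫ ω, ⟪h₀, φ ω⟫ ^ 2 ∂P) / 4 := integral_div _ _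

lemma integral_inner_sq_le [IsProbabilityMeasure P] {κ : ℝ} (hφ : ∀ᵐ ω ∂P, ‖φ ω‖ ≤ κ) (h : H) :
    ∫ ω, ⟪h, φ ω⟫ ^ 2 ∂P ≤ (κ * ‖h‖) ^ 2 := by
  have hbound : ∀ᵐ ω ∂P, ⟪h, φ ω⟫ ^ 2 ≤ (κ * ‖h‖) ^ 2 := hφ.mono fun ω hω => by
    rw [← sq_abs]
    refine pow_le_pow_left₀ (abs_nonneg _) ?_ 2
    calc |⟪h, φ ω⟫| ≤ ‖h‖ * ‖φ ω‖ := abs_real_inner_le_norm _ _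
      _ ≤ κ * ‖h‖ := by rw [mul_comm]; gcongr
  simpa using integral_mono_of_nonneg (.of_forall fun ω => sq_nonneg _) (integrable_const _) hbound

end Ridge

/-- Norm bound on the regularized population ridge solution. -/
theorem stmt6 {H : Type*} [NormedAddCommGroup H] [InnerProductSpace ℝ H] [CompleteSpace H]
    {Ω : Type*} [MeasurableSpace Ω] (P : Measure Ω) [IsProbabilityMeasure P]
    (φ : Ω → H) (Y : Ω → ℝ) (κ C : ℝ)
    (hφm : AEStronglyMeasurable φ P) (hYm : AEStronglyMeasurable Y P)
    (hφ : ∀ᵐ ω ∂P, ‖φ ω‖ ≤ κ) (hY : ∀ᵐ ω ∂P, |Y ω| ≤ C)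
    (T : H →L[ℝ] H) (hT : ∀ h : H, T h = ∫ ω, ⟪φ ω, h⟫ • φ ω ∂P)
    (h₀ : H) (hh₀ : (∫ ω, Y ω • φ ω ∂P) = T h₀)
    (ξ : ℝ) (hξ : 0 < ξ) (hreg : H)
    (hmin : ∀ h : H,
      (∫ ω, (Y ω - ⟪hreg, φ ω⟫) ^ 2 ∂P) + ξ * ‖hreg‖ ^ 2
        ≤ (∫ ω, (Y ω - ⟪h, φ ω⟫) ^ 2 ∂P) + ξ * ‖h‖ ^ 2) :
    ‖hreg‖ ≤ κ * ‖h₀‖ / Real.sqrt ξ := by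
  have hκ : 0 ≤ κ := (norm_nonneg _).trans hφ.exists.choose_spec
  have hφ2 : MemLp φ 2 P := .of_bound hφm κ hφ
  have hY2 : MemLp Y 2 P := .of_bound hYm C (by simpa only [Real.norm_eq_abs] using hY)
  have sharp := mul_norm_sq_le_of_forall_ridgeRisk_le hY2 hφ2 (hT h₀) hh₀ hmin
  have hg := integral_inner_sq_le hφ h₀
  exact le_div_sqrt_of_mul_sq_le hξ (by positivity) (by linarith [sq_nonneg (κ * ‖h₀‖)])
end
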